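/- arXiv:2309.14697 — 9 statements merged into one kernel-verified Lean document; each statement's English description precedes it below -/
import Mathlib

section
/- Let c, c₁, c₂ be real numbers and let U = {x ∈ ℝ : c₂ − cos(c·x + c₁) ≠ 0}. Then the function α : U → ℝ defined by α(x) = (c/2)·sin(c·x + c₁)/(c₂ − cos(c·x + c₁)) satisfies the Codazzi-like equation α''(x) + 6·α(x)·α'(x) + 4·α(x)³ + c²·α(x) = 0 at every point x ∈ U. -/
/-!
Writing `α = w' / (2 w)`, the substitution linearises the Codazzi-like equation:
`α'' + 6 α α' + 4 α³ + c² α = (w''' + c² w') / (2 w)`. For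
`w(x) = c₂ − cos(c x + c₁)` one has `α = (c/2) sin(c x + c₁) / w` and
`w''' + c² w' = −c³ sin(c x + c₁) + c³ sin(c x + c₁) = 0`.
-/

open Real

theorem HasDerivAt.fun_div_ratios {f g : ℝ → ℝ} {f' g' x : ℝ}
    (hf : HasDerivAt f f' x) (hg : HasDerivAt g g' x) (hx : g x ≠ 0) :
    HasDerivAt (fun t => f t / g t) (f' / g x - f x / g x * (g' / g x)) x :=
  (hf.fun_div hg hx).congr_deriv (by field_simp)

/-- With `r k = w⁽ᵏ⁾ / w` one has `r₁' = r₂ − r₁²` and `r₂' = r₃ − r₁ r₂`, so `β = r₁ = 2 α`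
satisfies `β'' + 3 β β' + β³ = r₃`. -/
theorem codazzi_lhs_half_logDeriv {w w₁ w₂ w₃ : ℝ → ℝ} (hw : ∀ t, HasDerivAt w (w₁ t) t)
    (hw₁ : ∀ t, HasDerivAt w₁ (w₂ t) t) (hw₂ : ∀ t, HasDerivAt w₂ (w₃ t) t)
    {x : ℝ} (hx : w x ≠ 0) :
    let α := fun t => w₁ t / (2 * w t)
    deriv (deriv α) x + 6 * α x * deriv α x + 4 * α x ^ 3 = w₃ x / (2 * w x) := by
  intro α
  have hα : α = fun t => w₁ t / w t / 2 := by
    funext t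
    simp only [α, div_div, mul_comm]
  have hα' : ∀ t, w t ≠ 0 →
      HasDerivAt α ((w₂ t / w t - w₁ t / w t * (w₁ t / w t)) / 2) t := fun t ht =>
    hα ▸ ((hw₁ t).fun_div_ratios (hw t) ht).div_const 2
  have hderiv_eq : deriv α =ᶠ[nhds x]
      fun t => (w₂ t / w t - w₁ t / w t * (w₁ t / w t)) / 2 := by
    have hcont : ContinuousAt w x := (hw x).continuousAt
    filter_upwards [hcont.eventually_ne hx] with t ht using (hα' t ht).deriv
  have hα'' : HasDerivAt (deriv α)
      ((w₃ x / w x - w₂ x / w x * (w₁ x / w x)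
        - 2 * (w₁ x / w x) * (w₂ x / w x - w₁ x / w x * (w₁ x / w x))) / 2) x := by
    have hr₁ := (hw₁ x).fun_div_ratios (hw x) hx
    have hr₂ := (hw₂ x).fun_div_ratios (hw x) hx
    refine (((hr₂.sub (hr₁.mul hr₁)).div_const 2).congr_deriv ?_).congr_of_eventuallyEq hderiv_eq
    ring
  rw [hα''.deriv, (hα' x hx).deriv]
  simp only [α]
  field_simp
  ring

theorem hasDerivAt_sin_affine (c c₁ t : ℝ) :
    HasDerivAt (fun t => sin (c * t + c₁)) (c * cos (c * t + c₁)) t := by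
  simpa [mul_comm] using ((hasDerivAt_id t).const_mul c |>.add_const c₁).sin

theorem hasDerivAt_cos_affine (c c₁ t : ℝ) :
    HasDerivAt (fun t => cos (c * t + c₁)) (-(c * sin (c * t + c₁))) t := by
  simpa [mul_comm] using ((hasDerivAt_id t).const_mul c |>.add_const c₁).cos

/-- The general-type function `α(x) = (c/2)·sin(c·x + c₁)/(c₂ − cos(c·x + c₁))`
satisfies the Codazzi-like equation `α'' + 6·α·α' + 4·α³ + c²·α = 0` at every
point of `U = {x | c₂ − cos(c·x + c₁) ≠ 0}`. -/
theorem codazzi_general_solution (c c₁ c₂ : ℝ) (α : ℝ → ℝ)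
    (hα : ∀ x : ℝ, α x = (c / 2) * Real.sin (c * x + c₁) / (c₂ - Real.cos (c * x + c₁))) :
    ∀ x : ℝ, c₂ - Real.cos (c * x + c₁) ≠ 0 →
      deriv (deriv α) x + 6 * α x * deriv α x + 4 * (α x) ^ 3 + c ^ 2 * α x = 0 := by
  intro x hx
  have hw t : HasDerivAt (fun t => c₂ - cos (c * t + c₁)) (c * sin (c * t + c₁)) t := by
    simpa using (hasDerivAt_cos_affine c c₁ t).const_sub c₂
  have hw₁ t : HasDerivAt (fun t => c * sin (c * t + c₁)) (c ^ 2 * cos (c * t + c₁)) t :=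
    ((hasDerivAt_sin_affine c c₁ t).const_mul c).congr_deriv (by ring)
  have hw₂ t : HasDerivAt (fun t => c ^ 2 * cos (c * t + c₁)) (-c ^ 3 * sin (c * t + c₁)) t :=
    ((hasDerivAt_cos_affine c c₁ t).const_mul (c ^ 2)).congr_deriv (by ring)
  have hα_eq : α = fun t => c * sin (c * t + c₁) / (2 * (c₂ - cos (c * t + c₁))) := by
    funext t
    rw [hα]
    field_simp
  subst hα_eq
  have hsubst := codazzi_lhs_half_logDeriv hw hw₁ hw₂ hx
  simp only at hsubst ⊢
  rw [hsubst]
  field_simp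
  ring
end

section
/- Let c, K₁ be real numbers and let U = {x ∈ ℝ : cos(c·x + c·K₁) ≠ 0}. Then the function α : U → ℝ defined by α(x) = −(c/2)·tan(c·x + c·K₁) satisfies the Codazzi-like equation α''(x) + 6·α(x)·α'(x) + 4·α(x)³ + c²·α(x) = 0 at every point x ∈ U. -/
/-! With `t = tan (c x + c K₁)` one has `α = -(c/2) t` and `α' = -(c²/2)(1 + t²)`, so `α` solves the
Riccati equation `α' = -2α² - c²/2`. Differentiating gives `α'' = -4αα'`, and then the left-hand side
of the Codazzi-like equation is `2α (α' + 2α² + c²/2) = 0`. -/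

open Filter Topology

lemma Real.hasDerivAt_tan_one_add_tan_sq {x : ℝ} (h : Real.cos x ≠ 0) :
    HasDerivAt Real.tan (1 + Real.tan x ^ 2) x := by
  simpa [one_div, ← Real.inv_one_add_tan_sq h] using Real.hasDerivAt_tan h

lemma hasDerivAt_neg_half_mul_tan {c d x : ℝ} (h : Real.cos (c * x + d) ≠ 0) :
    HasDerivAt (fun y => -(c / 2) * Real.tan (c * y + d))
      (-2 * (-(c / 2) * Real.tan (c * x + d)) ^ 2 - c ^ 2 / 2) x := by
  have hlin : HasDerivAt (fun y => c * y + d) c x := by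
    simpa using ((hasDerivAt_id x).const_mul c).add_const d
  exact (((Real.hasDerivAt_tan_one_add_tan_sq h).comp x hlin).const_mul (-(c / 2))).congr_deriv
    (by ring)

lemma codazzi_eq_zero_of_eventually_riccati {α : ℝ → ℝ} {c x : ℝ}
    (h : ∀ᶠ y in 𝓝 x, HasDerivAt α (-2 * α y ^ 2 - c ^ 2 / 2) y) :
    deriv (deriv α) x + 6 * α x * deriv α x + 4 * α x ^ 3 + c ^ 2 * α x = 0 := by
  have hα : HasDerivAt α (-2 * α x ^ 2 - c ^ 2 / 2) x := h.self_of_nhds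
  have hderiv : deriv α =ᶠ[𝓝 x] fun y => -2 * α y ^ 2 - c ^ 2 / 2 :=
    h.mono fun y hy => hy.deriv
  have hsecond : HasDerivAt (fun y => -2 * α y ^ 2 - c ^ 2 / 2)
      (-2 * (2 * α x * (-2 * α x ^ 2 - c ^ 2 / 2))) x := by
    simpa using ((hα.pow 2).const_mul (-2)).sub_const (c ^ 2 / 2)
  rw [hderiv.deriv_eq, hsecond.deriv, hα.deriv]
  ring

/-- The special function `α(x) = −(c/2)·tan(c·x + c·K₁)` satisfies the Codazzi-like
equation `α'' + 6·α·α' + 4·α³ + c²·α = 0` at every point of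
`U = {x | cos(c·x + c·K₁) ≠ 0}`. -/
theorem codazzi_special_solution_tan (c K₁ : ℝ) (α : ℝ → ℝ)
    (hα : ∀ x : ℝ, α x = -(c / 2) * Real.tan (c * x + c * K₁)) :
    ∀ x : ℝ, Real.cos (c * x + c * K₁) ≠ 0 →
      deriv (deriv α) x + 6 * α x * deriv α x + 4 * (α x) ^ 3 + c ^ 2 * α x = 0 := by
  intro x hx
  obtain rfl : α = fun y => -(c / 2) * Real.tan (c * y + c * K₁) := funext hα
  have hU : IsOpen {y : ℝ | Real.cos (c * y + c * K₁) ≠ 0} :=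
    isOpen_ne.preimage (by fun_prop)
  exact codazzi_eq_zero_of_eventually_riccati <|
    eventually_of_mem (hU.mem_nhds hx) fun y hy => hasDerivAt_neg_half_mul_tan hy
end

section
/- Let c > 0, let I ⊆ ℝ be a nonempty open interval, and let α : I → ℝ be twice continuously differentiable and satisfy the Codazzi-like equation α''(x) + 6·α(x)·α'(x) + 4·α(x)³ + c²·α(x) = 0 for all x ∈ I. Then either α(x) = 0 for all x ∈ I, or there exist real constants c₁ and c₂ such that for all x ∈ I one has c₂ − cos(c·x + c₁) ≠ 0 and α(x) = (c/2)·sin(c·x + c₁)/(c₂ − cos(c·x + c₁)). -/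
/-!
The substitution `w = exp (2 ∫ α)` linearizes the equation: `w' = 2αw`, `w'' = (2α' + 4α²) w`,
and the equation for `α` becomes `w''' + c² w' = 0`. Hence `w' = R sin (c x + c₁)`, so
`w = D - (R / c) cos (c x + c₁)` is positive, and `α = w' / (2 w)` is the stated quotient
(or `α = 0` when `R = 0`).
-/

open Real

section OpenPreconnected

variable {I : Set ℝ}

theorem exists_eq_const_of_hasDerivAt_zero (hIo : IsOpen I) (hIc : IsPreconnected I)
    {f : ℝ → ℝ} (hf : ∀ x ∈ I, HasDerivAt f 0 x) : ∃ a, ∀ x ∈ I, f x = a :=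
  hIo.exists_is_const_of_deriv_eq_zero hIc
    (fun x hx => (hf x hx).differentiableAt.differentiableWithinAt) (fun x hx => (hf x hx).deriv)

theorem ContinuousOn.exists_hasDerivAt (hIo : IsOpen I) (hIc : IsPreconnected I)
    {f : ℝ → ℝ} (hf : ContinuousOn f I) : ∃ F : ℝ → ℝ, ∀ x ∈ I, HasDerivAt F (f x) x := by
  rcases I.eq_empty_or_nonempty with rfl | ⟨x₀, hx₀⟩
  · exact ⟨0, by simp⟩
  refine ⟨fun x => ∫ t in x₀..x, f t, fun x hx => ?_⟩
  exact intervalIntegral.integral_hasDerivAt_right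
    (hf.mono (hIc.ordConnected.uIcc_subset hx₀ hx)).intervalIntegrable
    (hf.stronglyMeasurableAtFilter hIo x hx) (hf.continuousAt (hIo.mem_nhds hx))

theorem exists_mul_cos_add_mul_sin_eq (a b : ℝ) :
    ∃ R φ : ℝ, ∀ t, a * cos t + b * sin t = R * sin (t + φ) := by
  set z : ℂ := ⟨b, a⟩
  have hre : ‖z‖ * cos (Complex.arg z) = b := Complex.norm_mul_cos_arg z
  have him : ‖z‖ * sin (Complex.arg z) = a := Complex.norm_mul_sin_arg z
  refine ⟨‖z‖, Complex.arg z, fun t => ?_⟩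
  rw [sin_add]
  linear_combination (-sin t) * hre - cos t * him

theorem exists_eq_mul_sin_of_hasDerivAt (hIo : IsOpen I) (hIc : IsPreconnected I)
    {c : ℝ} (hc : c ≠ 0) {v e : ℝ → ℝ} (hv : ∀ x ∈ I, HasDerivAt v (e x) x)
    (he : ∀ x ∈ I, HasDerivAt e (-(c ^ 2) * v x) x) :
    ∃ R φ : ℝ, ∀ x ∈ I, v x = R * sin (c * x + φ) := by
  have hlin (x : ℝ) : HasDerivAt (fun x => c * x) c x := by
    simpa using (hasDerivAt_id x).const_mul c
  -- two first integrals of `v'' = -c² v`, from which `v` is recovered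
  obtain ⟨A, hA⟩ := exists_eq_const_of_hasDerivAt_zero hIo hIc
    (f := fun x => v x * cos (c * x) - e x / c * sin (c * x)) fun x hx => by
      refine ((hv x hx).mul (hlin x).cos).sub (((he x hx).div_const c).mul (hlin x).sin)
        |>.congr_deriv ?_
      field_simp
      ring
  obtain ⟨B, hB⟩ := exists_eq_const_of_hasDerivAt_zero hIo hIc
    (f := fun x => v x * sin (c * x) + e x / c * cos (c * x)) fun x hx => by
      refine ((hv x hx).mul (hlin x).sin).add (((he x hx).div_const c).mul (hlin x).cos)
        |>.congr_deriv ?_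
      field_simp
      ring
  obtain ⟨R, φ, hRφ⟩ := exists_mul_cos_add_mul_sin_eq A B
  refine ⟨R, φ, fun x hx => ?_⟩
  rw [← hRφ, ← hA x hx, ← hB x hx]
  linear_combination (-v x) * sin_sq_add_cos_sq (c * x)

theorem exists_eq_sub_mul_cos_of_hasDerivAt (hIo : IsOpen I) (hIc : IsPreconnected I)
    {c R φ : ℝ} (hc : c ≠ 0) {w : ℝ → ℝ} (hw : ∀ x ∈ I, HasDerivAt w (R * sin (c * x + φ)) x) :
    ∃ D, ∀ x ∈ I, w x = D - R / c * cos (c * x + φ) := by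
  have hlin (x : ℝ) : HasDerivAt (fun x => c * x + φ) c x := by
    simpa using ((hasDerivAt_id x).const_mul c).add_const φ
  obtain ⟨D, hD⟩ := exists_eq_const_of_hasDerivAt_zero hIo hIc
    (f := fun x => w x + R / c * cos (c * x + φ)) fun x hx => by
      refine (hw x hx).add ((hlin x).cos.const_mul (R / c)) |>.congr_deriv ?_
      field_simp
      ring
  exact ⟨D, fun x hx => by linarith [hD x hx]⟩

end OpenPreconnected

section Linearization

variable {α α' w : ℝ → ℝ} {x : ℝ}

theorem hasDerivAt_two_mul_mul (hα : HasDerivAt α (α' x) x)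
    (hw : HasDerivAt w (2 * α x * w x) x) :
    HasDerivAt (fun y => 2 * α y * w y) ((2 * α' x + 4 * α x ^ 2) * w x) x := by
  refine (hα.const_mul 2).mul hw |>.congr_deriv ?_
  ring

theorem hasDerivAt_mul_of_codazzi {c a'' : ℝ} (hα : HasDerivAt α (α' x) x)
    (hα' : HasDerivAt α' a'' x) (hw : HasDerivAt w (2 * α x * w x) x)
    (hode : a'' + 6 * α x * α' x + 4 * α x ^ 3 + c ^ 2 * α x = 0) :
    HasDerivAt (fun y => (2 * α' y + 4 * α y ^ 2) * w y) (-(c ^ 2) * (2 * α x * w x)) x := by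
  refine ((hα'.const_mul 2).add ((hα.pow 2).const_mul 4)).mul hw |>.congr_deriv ?_
  simp only [Pi.add_apply, Pi.pow_apply]
  linear_combination (2 * w x) * hode

end Linearization

theorem codazzi_classification_general (c : ℝ) (hc : 0 < c) (I : Set ℝ)
    (hIopen : IsOpen I) (hIconn : IsPreconnected I)
    (α : ℝ → ℝ) (hα : ContDiffOn ℝ 2 α I)
    (hode : ∀ x ∈ I,
      deriv (deriv α) x + 6 * α x * deriv α x + 4 * (α x) ^ 3 + c ^ 2 * α x = 0) :
    (∀ x ∈ I, α x = 0) ∨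
      ∃ c₁ c₂ : ℝ, ∀ x ∈ I, c₂ - Real.cos (c * x + c₁) ≠ 0 ∧
        α x = (c / 2) * Real.sin (c * x + c₁) / (c₂ - Real.cos (c * x + c₁)) := by
  have hα₁ : ∀ x ∈ I, HasDerivAt α (deriv α x) x := fun x hx =>
    ((hα.differentiableOn two_ne_zero).differentiableAt (hIopen.mem_nhds hx)).hasDerivAt
  have hα₂ : ∀ x ∈ I, HasDerivAt (deriv α) (deriv (deriv α) x) x := fun x hx =>
    (((hα.deriv_of_isOpen (m := 1) hIopen le_rfl).differentiableOn one_ne_zero).differentiableAt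
      (hIopen.mem_nhds hx)).hasDerivAt
  obtain ⟨F, hF⟩ := hα.continuousOn.exists_hasDerivAt hIopen hIconn
  set w : ℝ → ℝ := fun x => exp (2 * F x)
  have hwpos (x : ℝ) : 0 < w x := exp_pos _
  have hw : ∀ x ∈ I, HasDerivAt w (2 * α x * w x) x := fun x hx =>
    ((hF x hx).const_mul 2).exp.congr_deriv (by ring)
  obtain ⟨R, φ, hw'⟩ := exists_eq_mul_sin_of_hasDerivAt hIopen hIconn hc.ne'
    (fun x hx => hasDerivAt_two_mul_mul (hα₁ x hx) (hw x hx))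
    (fun x hx => hasDerivAt_mul_of_codazzi (hα₁ x hx) (hα₂ x hx) (hw x hx) (hode x hx))
  rcases eq_or_ne R 0 with rfl | hR
  · left
    intro x hx
    simpa [(hwpos x).ne'] using hw' x hx
  right
  obtain ⟨D, hD⟩ := exists_eq_sub_mul_cos_of_hasDerivAt hIopen hIconn hc.ne'
    fun x hx => (hw x hx).congr_deriv (hw' x hx)
  refine ⟨φ, D * c / R, fun x hx => ?_⟩
  have hden : D * c / R - cos (c * x + φ) = c / R * w x := by
    rw [hD x hx]
    field_simp
  have hwx := hwpos x
  rw [hden]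
  refine ⟨by positivity, ?_⟩
  rw [eq_div_iff (by positivity)]
  field_simp
  linear_combination hw' x hx

/-- Classification of solutions of the Codazzi-like equation with parameter `c > 0`
on a nonempty open interval: either `α ≡ 0`, or `α` has the general form
`(c/2)·sin(c·x + c₁)/(c₂ − cos(c·x + c₁))` with nonvanishing denominator. -/
theorem codazzi_classification (c : ℝ) (hc : 0 < c) (I : Set ℝ)
    (hIopen : IsOpen I) (hIconn : IsPreconnected I) (hIne : I.Nonempty)
    (α : ℝ → ℝ) (hα : ContDiffOn ℝ 2 α I)
    (hode : ∀ x ∈ I,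
      deriv (deriv α) x + 6 * α x * deriv α x + 4 * (α x) ^ 3 + c ^ 2 * α x = 0) :
    (∀ x ∈ I, α x = 0) ∨
      ∃ c₁ c₂ : ℝ, ∀ x ∈ I, c₂ - Real.cos (c * x + c₁) ≠ 0 ∧
        α x = (c / 2) * Real.sin (c * x + c₁) / (c₂ - Real.cos (c * x + c₁)) :=
  codazzi_classification_general c hc I hIopen hIconn α hα hode
end

section
/- Let c ∈ ℝ, let I ⊆ ℝ be a nonempty open interval, and let x : I → ℝ be three times continuously differentiable with x(s) > 0 for all s ∈ I. Suppose that α := x'/x satisfies the Codazzi-like equation α''(s) + 6·α(s)·α'(s) + 4·α(s)³ + c²·α(s) = 0 for all s ∈ I. Then there exists a real constant k such that (x²)''(s) + c²·x(s)² = k for all s ∈ I. -/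
/-!
With `y = x²` and `α = x'/x` one has `y' = 2αy`, hence `y'' = (2α' + 4α²) y` and
`(y'' + c²y)' = 2 (α'' + 6αα' + 4α³ + c²α) y`. So the Codazzi-like equation says exactly that
`y'' + c²y` has vanishing derivative, and it is constant on the (connected) interval.
-/

open Filter Set

section

variable {𝕜 : Type*} [NontriviallyNormedField 𝕜] {f h x : 𝕜 → 𝕜} {s : 𝕜} {U : Set 𝕜}

lemma deriv_sq_eq_two_mul_logDeriv_mul_sq (hf : DifferentiableAt 𝕜 f s) :
    deriv (fun t => f t ^ 2) s = 2 * logDeriv f s * f s ^ 2 := by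
  rw [deriv_fun_pow hf, logDeriv_apply]
  rcases eq_or_ne (f s) 0 with h0 | h0
  · simp [h0]
  · field_simp
    ring

lemma hasDerivAt_mul_of_deriv_eq_mul {a : 𝕜} (hf : DifferentiableAt 𝕜 f s)
    (hh : DifferentiableAt 𝕜 h s) (hfa : deriv f s = a * f s) :
    HasDerivAt (fun t => h t * f t) ((deriv h s + h s * a) * f s) s :=
  (hh.hasDerivAt.mul hf.hasDerivAt).congr_deriv (by rw [hfa]; ring)

lemma contDiffOn_logDeriv {n : ℕ} (hU : IsOpen U) (hx : ContDiffOn 𝕜 (n + 1) x U)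
    (hx0 : ∀ s ∈ U, x s ≠ 0) : ContDiffOn 𝕜 n (logDeriv x) U :=
  (hx.deriv_of_isOpen hU le_rfl).div (hx.of_le (by norm_cast; omega)) hx0

theorem hasDerivAt_deriv_deriv_sq_add_mul_sq (c : 𝕜) (hU : IsOpen U)
    (hx : ContDiffOn 𝕜 3 x U) (hx0 : ∀ s ∈ U, x s ≠ 0) (hs : s ∈ U) :
    HasDerivAt (fun t => deriv (deriv (fun σ => x σ ^ 2)) t + c ^ 2 * x t ^ 2)
      (2 * (deriv (deriv (logDeriv x)) s + 6 * logDeriv x s * deriv (logDeriv x) s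
        + 4 * logDeriv x s ^ 3 + c ^ 2 * logDeriv x s) * x s ^ 2) s := by
  set α := logDeriv x
  set y : 𝕜 → 𝕜 := fun σ => x σ ^ 2
  have hα : ContDiffOn 𝕜 2 α U := contDiffOn_logDeriv hU hx hx0
  have hα' : ContDiffOn 𝕜 1 (deriv α) U := hα.deriv_of_isOpen hU le_rfl
  have hxd : ∀ t ∈ U, DifferentiableAt 𝕜 x t := fun t ht =>
    (hx.differentiableOn (by norm_num)).differentiableAt (hU.mem_nhds ht)
  have hαd : ∀ t ∈ U, DifferentiableAt 𝕜 α t := fun t ht =>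
    (hα.differentiableOn (by norm_num)).differentiableAt (hU.mem_nhds ht)
  have hα'd : ∀ t ∈ U, DifferentiableAt 𝕜 (deriv α) t := fun t ht =>
    (hα'.differentiableOn one_ne_zero).differentiableAt (hU.mem_nhds ht)
  have hyd : ∀ t ∈ U, DifferentiableAt 𝕜 y t := fun t ht => (hxd t ht).pow 2
  have hy' : EqOn (deriv y) (fun t => 2 * α t * y t) U := fun t ht =>
    deriv_sq_eq_two_mul_logDeriv_mul_sq (hxd t ht)
  have hy'' : EqOn (deriv (deriv y)) (fun t => (2 * deriv α t + 4 * α t ^ 2) * y t) U := by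
    intro t ht
    rw [hy'.deriv hU ht, (hasDerivAt_mul_of_deriv_eq_mul (hyd t ht) ((hαd t ht).const_mul 2)
      (hy' ht)).deriv, deriv_const_mul _ (hαd t ht)]
    ring
  have hF : (fun t => deriv (deriv y) t + c ^ 2 * y t) =ᶠ[nhds s]
      fun t => (2 * deriv α t + 4 * α t ^ 2 + c ^ 2) * y t :=
    eventually_of_mem (hU.mem_nhds hs) fun t ht => by
      simp only [hy'' ht]
      ring
  have hcoeff : HasDerivAt (fun t => 2 * deriv α t + 4 * α t ^ 2 + c ^ 2)
      (2 * deriv (deriv α) s + 8 * α s * deriv α s) s := by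
    refine ((((hα'd s hs).hasDerivAt.const_mul 2).add
      (((hαd s hs).hasDerivAt.pow 2).const_mul 4)).add_const (c ^ 2)).congr_deriv ?_
    push_cast
    ring
  refine ((hasDerivAt_mul_of_deriv_eq_mul (hyd s hs) hcoeff.differentiableAt
    (hy' hs)).congr_of_eventuallyEq hF).congr_deriv ?_
  rw [hcoeff.deriv]
  ring

end

theorem codazzi_first_integral_general (c : ℝ) (I : Set ℝ)
    (hIopen : IsOpen I) (hIconn : IsPreconnected I)
    (x : ℝ → ℝ) (hx : ContDiffOn ℝ 3 x I) (hxpos : ∀ s ∈ I, 0 < x s)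
    (α : ℝ → ℝ) (hα : ∀ s : ℝ, α s = deriv x s / x s)
    (hode : ∀ s ∈ I,
      deriv (deriv α) s + 6 * α s * deriv α s + 4 * (α s) ^ 3 + c ^ 2 * α s = 0) :
    ∃ k : ℝ, ∀ s ∈ I,
      deriv (deriv (fun σ => (x σ) ^ 2)) s + c ^ 2 * (x s) ^ 2 = k := by
  obtain rfl : α = logDeriv x := funext hα
  have hF : ∀ s ∈ I, HasDerivAt (fun t => deriv (deriv (fun σ => x σ ^ 2)) t + c ^ 2 * x t ^ 2)
      0 s := fun s hs => by
    simpa [hode s hs] using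
      hasDerivAt_deriv_deriv_sq_add_mul_sq c hIopen hx (fun t ht => (hxpos t ht).ne') hs
  exact hIopen.exists_is_const_of_deriv_eq_zero hIconn
    (fun s hs => (hF s hs).differentiableAt.differentiableWithinAt) fun s hs => (hF s hs).deriv

/-- If `x > 0` is `C³` on a nonempty open interval and `α = x'/x` satisfies the
Codazzi-like equation, then `(x²)'' + c²·x²` is constant on the interval. -/
theorem codazzi_first_integral (c : ℝ) (I : Set ℝ)
    (hIopen : IsOpen I) (hIconn : IsPreconnected I) (hIne : I.Nonempty)
    (x : ℝ → ℝ) (hx : ContDiffOn ℝ 3 x I) (hxpos : ∀ s ∈ I, 0 < x s)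
    (α : ℝ → ℝ) (hα : ∀ s : ℝ, α s = deriv x s / x s)
    (hode : ∀ s ∈ I,
      deriv (deriv α) s + 6 * α s * deriv α s + 4 * (α s) ^ 3 + c ^ 2 * α s = 0) :
    ∃ k : ℝ, ∀ s ∈ I,
      deriv (deriv (fun σ => (x σ) ^ 2)) s + c ^ 2 * (x s) ^ 2 = k :=
  codazzi_first_integral_general c I hIopen hIconn x hx hxpos α hα hode
end

section
/- Let c ∈ ℝ, let I ⊆ ℝ be a nonempty open interval, and let x, t : I → ℝ be twice continuously differentiable with x(s) > 0 and x'(s)² + t'(s)² = 1 for all s ∈ I. Suppose that for all s ∈ I the constant p-mean curvature equation holds: x(s)³·(x'(s)·t''(s) − x''(s)·t'(s)) + t'(s)³ = −c · x(s) · (x(s)²·x'(s)² + t'(s)²)^{3/2}. Then the energy function E(s) = x(s)·t'(s)/√(x(s)²·x'(s)² + t'(s)²) + (c/2)·x(s)² is constant on I. -/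
/-!
With `r = √(x² x'² + t'²)`, a direct computation gives
`E' = x' · (x³ (x' t'' - x'' t') + t'³ + c x r³) / r³`,
whose numerator is the constant p-mean curvature equation. So `E' = 0` on `I`, and `E` is
constant on the open preconnected set `I`.
-/

open Real

noncomputable def ritoreRosalesEnergy (c : ℝ) (x x' t' : ℝ → ℝ) (s : ℝ) : ℝ :=
  x s * t' s / √(x s ^ 2 * x' s ^ 2 + t' s ^ 2) + c / 2 * x s ^ 2

lemma sq_mul_sq_add_sq_pos {x a b : ℝ} (hx : x ≠ 0) (hab : a ^ 2 + b ^ 2 = 1) :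
    0 < x ^ 2 * a ^ 2 + b ^ 2 := by
  rcases eq_or_ne a 0 with rfl | ha
  · nlinarith
  · have : 0 < x ^ 2 * a ^ 2 := by positivity
    positivity

lemma rpow_three_halves_eq_sqrt_pow {q : ℝ} (hq : 0 ≤ q) : q ^ ((3 : ℝ) / 2) = √q ^ 3 := by
  rw [rpow_div_two_eq_sqrt _ hq]
  norm_cast

lemma hasDerivAt_ritoreRosalesEnergy (c : ℝ) {x x' t' : ℝ → ℝ} {x'' t'' s : ℝ}
    (hx : HasDerivAt x (x' s) s) (hx' : HasDerivAt x' x'' s) (ht' : HasDerivAt t' t'' s)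
    (hQ : 0 < x s ^ 2 * x' s ^ 2 + t' s ^ 2) :
    HasDerivAt (ritoreRosalesEnergy c x x' t')
      (x' s * (x s ^ 3 * (x' s * t'' - x'' * t' s) + t' s ^ 3
          + c * x s * (x s ^ 2 * x' s ^ 2 + t' s ^ 2) ^ ((3 : ℝ) / 2))
        / (x s ^ 2 * x' s ^ 2 + t' s ^ 2) ^ ((3 : ℝ) / 2)) s := by
  set r := √(x s ^ 2 * x' s ^ 2 + t' s ^ 2) with hr
  have hr_pos : 0 < r := sqrt_pos.2 hQ
  have hr_sq : r ^ 2 = x s ^ 2 * x' s ^ 2 + t' s ^ 2 := sq_sqrt hQ.le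
  have hr_deriv := ((((hx.pow 2).mul (hx'.pow 2)).add (ht'.pow 2)).sqrt hQ.ne')
  have hE := ((hx.mul ht').div hr_deriv hr_pos.ne').add ((hx.pow 2).const_mul (c / 2))
  refine hE.congr_deriv ?_
  simp only [Pi.pow_apply, Pi.mul_apply, Pi.add_apply, Nat.cast_ofNat, ← hr,
    rpow_three_halves_eq_sqrt_pow hQ.le]
  field_simp
  linear_combination (x' s * t' s + x s * t'') * hr_sq

theorem energy_constant_general (c : ℝ) (I : Set ℝ)
    (hIopen : IsOpen I) (hIconn : IsPreconnected I)
    (x t : ℝ → ℝ) (hx : ContDiffOn ℝ 2 x I) (ht : ContDiffOn ℝ 2 t I)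
    (hxpos : ∀ s ∈ I, 0 < x s)
    (harc : ∀ s ∈ I, (deriv x s) ^ 2 + (deriv t s) ^ 2 = 1)
    (hH : ∀ s ∈ I,
      (x s) ^ 3 * (deriv x s * deriv (deriv t) s - deriv (deriv x) s * deriv t s)
          + (deriv t s) ^ 3
        = -c * x s * ((x s) ^ 2 * (deriv x s) ^ 2 + (deriv t s) ^ 2) ^ ((3 : ℝ) / 2)) :
    ∃ E : ℝ, ∀ s ∈ I,
      x s * deriv t s / Real.sqrt ((x s) ^ 2 * (deriv x s) ^ 2 + (deriv t s) ^ 2)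
        + (c / 2) * (x s) ^ 2 = E := by
  have hasDerivAt_deriv {f : ℝ → ℝ} {n : WithTop ℕ∞} (hf : ContDiffOn ℝ n f I) (hn : n ≠ 0)
      {s : ℝ} (hs : s ∈ I) : HasDerivAt f (deriv f s) s :=
    (hf.differentiableOn hn).hasDerivAt (hIopen.mem_nhds hs)
  have hE : ∀ s ∈ I, HasDerivAt (ritoreRosalesEnergy c x (deriv x) (deriv t)) 0 s := by
    intro s hs
    have h := hasDerivAt_ritoreRosalesEnergy c (hasDerivAt_deriv hx two_ne_zero hs)
      (hasDerivAt_deriv (hx.deriv_of_isOpen hIopen le_rfl) one_ne_zero hs)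
      (hasDerivAt_deriv (ht.deriv_of_isOpen hIopen le_rfl) one_ne_zero hs)
      (sq_mul_sq_add_sq_pos (hxpos s hs).ne' (harc s hs))
    rwa [hH s hs, neg_mul, neg_mul, neg_add_cancel, mul_zero, zero_div] at h
  exact hIopen.exists_is_const_of_deriv_eq_zero hIconn
    (fun s hs ↦ (hE s hs).differentiableAt.differentiableWithinAt) (fun s hs ↦ (hE s hs).deriv)

/-- For the generating curve `(x, t)` (Euclidean arc-length, `x > 0`) of a
rotationally invariant surface of constant p-mean curvature `c` in the Heisenberg
group, the Ritoré–Rosales energy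
`E(s) = x·t'/√(x²·x'² + t'²) + (c/2)·x²` is constant. -/
theorem energy_constant (c : ℝ) (I : Set ℝ)
    (hIopen : IsOpen I) (hIconn : IsPreconnected I) (hIne : I.Nonempty)
    (x t : ℝ → ℝ) (hx : ContDiffOn ℝ 2 x I) (ht : ContDiffOn ℝ 2 t I)
    (hxpos : ∀ s ∈ I, 0 < x s)
    (harc : ∀ s ∈ I, (deriv x s) ^ 2 + (deriv t s) ^ 2 = 1)
    (hH : ∀ s ∈ I,
      (x s) ^ 3 * (deriv x s * deriv (deriv t) s - deriv (deriv x) s * deriv t s)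
          + (deriv t s) ^ 3
        = -c * x s * ((x s) ^ 2 * (deriv x s) ^ 2 + (deriv t s) ^ 2) ^ ((3 : ℝ) / 2)) :
    ∃ E : ℝ, ∀ s ∈ I,
      x s * deriv t s / Real.sqrt ((x s) ^ 2 * (deriv x s) ^ 2 + (deriv t s) ^ 2)
        + (c / 2) * (x s) ^ 2 = E :=
  energy_constant_general c I hIopen hIconn x t hx ht hxpos harc hH
end

section
/- Let λ, E ∈ ℝ, let I ⊆ ℝ be a nonempty open interval, and let x, t : I → ℝ with x twice continuously differentiable and t continuously differentiable, such that for all s ∈ I: x(s) > 0, x'(s)² + t'(s)²/x(s)² = 1, and t'(s) = E − λ·x(s)². Then at every s ∈ I with x'(s) ≠ 0 one has (x²)''(s) + 4λ²·x(s)² = 2 + 4λE; that is, with c = 2λ and u = x², the constant in u'' + c²·u = k equals k = 2cE + 2. -/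
/-!
For `u = x²` one has `u' = 2 x x'`, so unit horizontal speed and the energy relation give the
first integral `(u')² = 4u - 4(E - λu)²`. Differentiating it yields `2 u' u'' = (4 + 8λ(E - λu)) u'`,
and cancelling `u' ≠ 0` leaves `u'' = 2 + 4λE - 4λ²u`.
-/

open Filter Topology

theorem deriv_deriv_eq_half_of_sq_deriv_eq_comp {f P : ℝ → ℝ} {s P' : ℝ}
    (hf : DifferentiableAt ℝ f s) (hf' : DifferentiableAt ℝ (deriv f) s)
    (hP : HasDerivAt P P' (f s)) (hsq : ∀ᶠ σ in 𝓝 s, deriv f σ ^ 2 = P (f σ))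
    (hne : deriv f s ≠ 0) :
    deriv (deriv f) s = P' / 2 := by
  have hL : HasDerivAt (fun σ => deriv f σ ^ 2) (2 * deriv f s * deriv (deriv f) s) s := by
    simpa using hf'.hasDerivAt.fun_pow 2
  have hR : HasDerivAt (fun σ => P (f σ)) (P' * deriv f s) s := hP.comp s hf.hasDerivAt
  have hderiv : 2 * deriv f s * deriv (deriv f) s = P' * deriv f s :=
    hL.unique (hR.congr_of_eventuallyEq hsq)
  field_simp
  exact mul_right_cancel₀ hne (by linear_combination hderiv)

theorem sq_deriv_sq_eq_of_unit_speed {x t : ℝ → ℝ} {E lam s : ℝ}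
    (hxd : DifferentiableAt ℝ x s) (hxs : x s ≠ 0)
    (hunit : deriv x s ^ 2 + deriv t s ^ 2 / x s ^ 2 = 1)
    (henergy : deriv t s = E - lam * x s ^ 2) :
    deriv (fun σ => x σ ^ 2) s ^ 2 = 4 * x s ^ 2 - 4 * (E - lam * x s ^ 2) ^ 2 := by
  rw [henergy] at hunit
  field_simp at hunit
  rw [(hxd.hasDerivAt.fun_pow 2).deriv]
  linear_combination 4 * hunit

theorem relation_k_energy_general (lam E : ℝ) (I : Set ℝ)
    (hIopen : IsOpen I)
    (x t : ℝ → ℝ) (hx : ContDiffOn ℝ 2 x I)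
    (hxpos : ∀ s ∈ I, 0 < x s)
    (hunit : ∀ s ∈ I, (deriv x s) ^ 2 + (deriv t s) ^ 2 / (x s) ^ 2 = 1)
    (henergy : ∀ s ∈ I, deriv t s = E - lam * (x s) ^ 2) :
    ∀ s ∈ I, deriv x s ≠ 0 →
      deriv (deriv (fun σ => (x σ) ^ 2)) s + 4 * lam ^ 2 * (x s) ^ 2
        = 2 + 4 * lam * E := by
  intro s hs hxs
  have hxd : ∀ σ ∈ I, DifferentiableAt ℝ x σ := fun σ hσ =>
    (hx.contDiffAt (hIopen.mem_nhds hσ)).differentiableAt two_ne_zero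
  have hu' : DifferentiableAt ℝ (deriv fun σ => x σ ^ 2) s :=
    (((hx.pow 2).deriv_of_isOpen hIopen le_rfl).contDiffAt (hIopen.mem_nhds hs)).differentiableAt
      one_ne_zero
  have hne : deriv (fun σ => x σ ^ 2) s ≠ 0 := by
    rw [((hxd s hs).hasDerivAt.fun_pow 2).deriv]
    simpa using ⟨(hxpos s hs).ne', hxs⟩
  have hP : HasDerivAt (fun u => 4 * u - 4 * (E - lam * u) ^ 2)
      (4 + 8 * lam * (E - lam * x s ^ 2)) (x s ^ 2) := by
    refine (((hasDerivAt_id' _).const_mul 4).fun_sub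
      ((((hasDerivAt_id' _).const_mul lam).const_sub E).fun_pow 2 |>.const_mul 4)).congr_deriv ?_
    ring
  have hsq := eventually_of_mem (hIopen.mem_nhds hs) fun σ hσ =>
    sq_deriv_sq_eq_of_unit_speed (hxd σ hσ) (hxpos σ hσ).ne' (hunit σ hσ) (henergy σ hσ)
  rw [deriv_deriv_eq_half_of_sq_deriv_eq_comp ((hxd s hs).fun_pow 2) hu' hP hsq hne]
  ring

/-- In horizontal arc-length parametrization (`x'² + t'²/x² = 1`) with constant
Ritoré–Rosales energy (`t' = E − λ·x²`), the function `u = x²` satisfies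
`u'' + 4λ²·u = 2 + 4λE`, i.e. `u'' + c²·u = k` with `c = 2λ` and `k = 2cE + 2`. -/
theorem relation_k_energy (lam E : ℝ) (I : Set ℝ)
    (hIopen : IsOpen I) (hIconn : IsPreconnected I) (hIne : I.Nonempty)
    (x t : ℝ → ℝ) (hx : ContDiffOn ℝ 2 x I) (ht : ContDiffOn ℝ 1 t I)
    (hxpos : ∀ s ∈ I, 0 < x s)
    (hunit : ∀ s ∈ I, (deriv x s) ^ 2 + (deriv t s) ^ 2 / (x s) ^ 2 = 1)
    (henergy : ∀ s ∈ I, deriv t s = E - lam * (x s) ^ 2) :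
    ∀ s ∈ I, deriv x s ≠ 0 →
      deriv (deriv (fun σ => (x σ) ^ 2)) s + 4 * lam ^ 2 * (x s) ^ 2
        = 2 + 4 * lam * E :=
  relation_k_energy_general lam E I hIopen x t hx hxpos hunit henergy
end

section
/- Let c > 0, c₁ ∈ ℝ, c₂ > 1, h ∈ ℝ, K ∈ ℝ. For x ∈ ℝ set D(x) = c₂ − cos(c·x + c₁), α(x) = (c/2)·sin(c·x + c₁)/D(x), a(x) = (−c/2 + ((c/2)·c₂ + h)/D(x)) / √(1 + α(x)²), and b(x) = (exp(K)/D(x)) / √(1 + α(x)²). Then for all x ∈ ℝ: (i) −a'(x) + a(x)·b'(x)/b(x) = c·α(x)/√(1 + α(x)²), and (ii) −b'(x)/b(x) = 2·α(x) + α(x)·α'(x)/(1 + α(x)²). -/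
/-!
Write `S = √(1 + α²)`, so that `a = f / S` and `b = g / S` with `f = -c/2 + m/D`,
`m = (c/2)c₂ + h`, and `g = e^K / D`. The key identity is `D' = c sin(cx + c₁) = 2αD`,
i.e. `D'/D = 2α`. Then `b'/b = -D'/D - S'/S = -2α - αα'/(1 + α²)`, which is (ii). For (i),
the weight `S` cancels from `-a' + a b'/b`, leaving `(-f' - f D'/D)/S`; the `m`-terms of
`-f' - f D'/D` cancel as well, leaving `(c/2) D'/D = cα`.
-/

open Real

section LogDeriv

variable {𝕜 : Type*} [NontriviallyNormedField 𝕜] {f g w D : 𝕜 → 𝕜} {x : 𝕜}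

theorem neg_deriv_div_add_mul_logDeriv_div (hf : DifferentiableAt 𝕜 f x)
    (hg : DifferentiableAt 𝕜 g x) (hw : DifferentiableAt 𝕜 w x) (hgx : g x ≠ 0)
    (hwx : w x ≠ 0) :
    -deriv (fun y => f y / w y) x + f x / w x * logDeriv (fun y => g y / w y) x =
      (-deriv f x + f x * logDeriv g x) / w x := by
  rw [logDeriv_div x hgx hwx hg hw, deriv_fun_div hf hw hwx, logDeriv_apply, logDeriv_apply]
  field_simp
  ring

theorem logDeriv_const_div {k : 𝕜} (hk : k ≠ 0) (hD : DifferentiableAt 𝕜 D x) (hDx : D x ≠ 0) :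
    logDeriv (fun y => k / D y) x = -logDeriv D x := by
  rw [logDeriv_div x hk hDx (differentiableAt_const k) hD, logDeriv_const, Pi.zero_apply,
    zero_sub]

theorem logDeriv_const_div_div {k : 𝕜} (hk : k ≠ 0) (hD : DifferentiableAt 𝕜 D x)
    (hw : DifferentiableAt 𝕜 w x) (hDx : D x ≠ 0) (hwx : w x ≠ 0) :
    logDeriv (fun y => k / D y / w y) x = -logDeriv D x - logDeriv w x := by
  rw [logDeriv_div (f := fun y => k / D y) x (div_ne_zero hk hDx) hwx
    (by fun_prop (disch := exact hDx)) hw, logDeriv_const_div hk hD hDx]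

theorem neg_deriv_const_add_div_sub_mul_logDeriv (p q : 𝕜) (hD : DifferentiableAt 𝕜 D x)
    (hDx : D x ≠ 0) :
    -deriv (fun y => p + q / D y) x - (p + q / D x) * logDeriv D x = -p * logDeriv D x := by
  rw [deriv_const_add, deriv_fun_div (differentiableAt_const q) hD hDx, deriv_const,
    logDeriv_apply]
  field_simp
  ring

theorem neg_deriv_div_add_mul_logDeriv_const_div_div (p q : 𝕜) {k : 𝕜} (hk : k ≠ 0)
    (hD : DifferentiableAt 𝕜 D x) (hw : DifferentiableAt 𝕜 w x) (hDx : D x ≠ 0)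
    (hwx : w x ≠ 0) :
    -deriv (fun y => (p + q / D y) / w y) x +
        (p + q / D x) / w x * logDeriv (fun y => k / D y / w y) x =
      -p * logDeriv D x / w x := by
  rw [neg_deriv_div_add_mul_logDeriv_div (f := fun y => p + q / D y) (g := fun y => k / D y)
      (by fun_prop (disch := exact hDx)) (by fun_prop (disch := exact hDx)) hw
      (div_ne_zero hk hDx) hwx,
    logDeriv_const_div hk hD hDx, mul_neg, ← sub_eq_add_neg,
    neg_deriv_const_add_div_sub_mul_logDeriv p q hD hDx]

end LogDeriv

theorem logDeriv_sqrt {u : ℝ → ℝ} {x : ℝ} (hu : DifferentiableAt ℝ u x) (hux : 0 < u x) :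
    logDeriv (fun y => √(u y)) x = logDeriv u x / 2 := by
  rw [logDeriv_apply, deriv_sqrt hu hux.ne', logDeriv_apply]
  field_simp
  rw [sq_sqrt hux.le]

theorem logDeriv_sqrt_one_add_sq {α : ℝ → ℝ} {x : ℝ} (hα : DifferentiableAt ℝ α x) :
    logDeriv (fun y => √(1 + α y ^ 2)) x = α x * deriv α x / (1 + α x ^ 2) := by
  rw [logDeriv_sqrt (by fun_prop) (by positivity), logDeriv_apply, deriv_const_add,
    deriv_fun_pow hα]
  ring

theorem logDeriv_sub_cos_mul_add (c c₁ c₂ x : ℝ) :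
    logDeriv (fun y => c₂ - cos (c * y + c₁)) x =
      c * sin (c * x + c₁) / (c₂ - cos (c * x + c₁)) := by
  rw [logDeriv_apply]
  congr 1
  have := ((hasDerivAt_id x).const_mul c |>.add_const c₁).cos.const_sub c₂
  simpa [mul_comm] using this.deriv

theorem sub_cos_pos {c₂ : ℝ} (hc₂ : 1 < c₂) (θ : ℝ) : 0 < c₂ - cos θ := by
  linarith [cos_le_one θ]

theorem integrability_conditions_general (c c₁ c₂ h K : ℝ) (hc₂ : 1 < c₂)
    (D α a b : ℝ → ℝ)
    (hD : ∀ x : ℝ, D x = c₂ - Real.cos (c * x + c₁))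
    (hα : ∀ x : ℝ, α x = (c / 2) * Real.sin (c * x + c₁) / D x)
    (ha : ∀ x : ℝ, a x = (-(c / 2) + ((c / 2) * c₂ + h) / D x) / Real.sqrt (1 + (α x) ^ 2))
    (hb : ∀ x : ℝ, b x = (Real.exp K / D x) / Real.sqrt (1 + (α x) ^ 2)) :
    ∀ x : ℝ,
      (-deriv a x + a x * deriv b x / b x = c * α x / Real.sqrt (1 + (α x) ^ 2)) ∧
      (-(deriv b x / b x) = 2 * α x + α x * deriv α x / (1 + (α x) ^ 2)) := by
  intro x
  obtain rfl : D = fun y => c₂ - cos (c * y + c₁) := funext hD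
  have hDx : c₂ - cos (c * x + c₁) ≠ 0 := (sub_cos_pos hc₂ _).ne'
  have hDdiff : DifferentiableAt ℝ (fun y => c₂ - cos (c * y + c₁)) x := by fun_prop
  have hlogD : logDeriv (fun y => c₂ - cos (c * y + c₁)) x = 2 * α x := by
    rw [logDeriv_sub_cos_mul_add, hα]
    ring
  have hαdiff : DifferentiableAt ℝ α x := by
    rw [funext hα]
    fun_prop (disch := exact hDx)
  have hSdiff : DifferentiableAt ℝ (fun y => √(1 + α y ^ 2)) x :=
    DifferentiableAt.sqrt (by fun_prop) (by positivity)
  have hSx : √(1 + α x ^ 2) ≠ 0 := by positivity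
  rw [funext ha, funext hb, mul_div_assoc, ← logDeriv_apply,
    neg_deriv_div_add_mul_logDeriv_const_div_div _ _ (exp_ne_zero K) hDdiff hSdiff hDx hSx,
    logDeriv_const_div_div (exp_ne_zero K) hDdiff hSdiff hDx hSx,
    logDeriv_sqrt_one_add_sq hαdiff, hlogD]
  constructor <;> ring

/-- The normalized data `α`, `a`, `b` of a constant p-mean curvature surface of
general type with `c₂ > 1` satisfy the first two integrability conditions
`−a' + a·b'/b = c·α/√(1 + α²)` and `−b'/b = 2α + α·α'/(1 + α²)`. -/
theorem integrability_conditions (c c₁ c₂ h K : ℝ) (hc : 0 < c) (hc₂ : 1 < c₂)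
    (D α a b : ℝ → ℝ)
    (hD : ∀ x : ℝ, D x = c₂ - Real.cos (c * x + c₁))
    (hα : ∀ x : ℝ, α x = (c / 2) * Real.sin (c * x + c₁) / D x)
    (ha : ∀ x : ℝ, a x = (-(c / 2) + ((c / 2) * c₂ + h) / D x) / Real.sqrt (1 + (α x) ^ 2))
    (hb : ∀ x : ℝ, b x = (Real.exp K / D x) / Real.sqrt (1 + (α x) ^ 2)) :
    ∀ x : ℝ,
      (-deriv a x + a x * deriv b x / b x = c * α x / Real.sqrt (1 + (α x) ^ 2)) ∧
      (-(deriv b x / b x) = 2 * α x + α x * deriv α x / (1 + (α x) ^ 2)) :=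
  integrability_conditions_general c c₁ c₂ h K hc₂ D α a b hD hα ha hb
end

section
/- Let λ ≠ 0, k ≠ 0, and m ∈ ℝ with m ≠ 1, and define x₁(θ) = sin θ/(2λ) − sin((m−1)θ)/(2λ·k·(m−1)) and x₂(θ) = −cos θ/(2λ) − cos((m−1)θ)/(2λ·k·(m−1)). Then for all θ: x₂'(θ)·cos θ − x₁'(θ)·sin θ = sin(mθ)/(2λk) and 1/(2λ) − (x₂'(θ)·sin θ + x₁'(θ)·cos θ) = cos(mθ)/(2λk). -/
/-!
Differentiating, `(x₁', x₂') = (cos θ/(2λ) − cos((m−1)θ)/(2λk), sin θ/(2λ) + sin((m−1)θ)/(2λk))`.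
Rotating this vector by `−θ`, the `1/(2λ)` part becomes `(0, 1/(2λ))` since `sin² + cos² = 1`,
and the addition formulas turn the `1/(2λk)` part into `(sin(mθ), −cos(mθ))/(2λk)`.
-/

open Real

section

variable {n : ℝ} (hn : n ≠ 0) (q θ : ℝ)
include hn

lemma hasDerivAt_sin_mul_div_mul :
    HasDerivAt (fun θ => sin (n * θ) / (q * n)) (cos (n * θ) / q) θ := by
  refine (((hasDerivAt_id θ).const_mul n).sin.div_const (q * n)).congr_deriv ?_
  rw [id, mul_one, mul_div_mul_right _ _ hn]

lemma hasDerivAt_cos_mul_div_mul :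
    HasDerivAt (fun θ => cos (n * θ) / (q * n)) (-sin (n * θ) / q) θ := by
  refine (((hasDerivAt_id θ).const_mul n).cos.div_const (q * n)).congr_deriv ?_
  rw [id, mul_one, mul_div_mul_right _ _ hn]

lemma hasDerivAt_epicycle_fst (p : ℝ) :
    HasDerivAt (fun θ => sin θ / p - sin (n * θ) / (q * n)) (cos θ / p - cos (n * θ) / q) θ :=
  ((hasDerivAt_sin θ).div_const p).sub (hasDerivAt_sin_mul_div_mul hn q θ)

lemma hasDerivAt_epicycle_snd (p : ℝ) :
    HasDerivAt (fun θ => -cos θ / p - cos (n * θ) / (q * n)) (sin θ / p + sin (n * θ) / q) θ := by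
  have h := ((hasDerivAt_cos θ).neg.div_const p).sub (hasDerivAt_cos_mul_div_mul hn q θ)
  rwa [neg_neg, neg_div, sub_neg_eq_add] at h

end

theorem deformation_AB_general (lam k m : ℝ) (hm : m ≠ 1)
    (x₁ x₂ : ℝ → ℝ)
    (hx₁ : ∀ θ : ℝ,
      x₁ θ = Real.sin θ / (2 * lam) - Real.sin ((m - 1) * θ) / (2 * lam * k * (m - 1)))
    (hx₂ : ∀ θ : ℝ,
      x₂ θ = -Real.cos θ / (2 * lam) - Real.cos ((m - 1) * θ) / (2 * lam * k * (m - 1))) :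
    ∀ θ : ℝ,
      deriv x₂ θ * Real.cos θ - deriv x₁ θ * Real.sin θ = Real.sin (m * θ) / (2 * lam * k) ∧
      1 / (2 * lam) - (deriv x₂ θ * Real.sin θ + deriv x₁ θ * Real.cos θ)
        = Real.cos (m * θ) / (2 * lam * k) := by
  intro θ
  have hn : m - 1 ≠ 0 := sub_ne_zero.mpr hm
  have hx₁' := (hasDerivAt_epicycle_fst hn (2 * lam * k) θ (2 * lam)).deriv
  have hx₂' := (hasDerivAt_epicycle_snd hn (2 * lam * k) θ (2 * lam)).deriv
  rw [← funext hx₁] at hx₁'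
  rw [← funext hx₂] at hx₂'
  rw [hx₁', hx₂', show m * θ = (m - 1) * θ + θ by ring, sin_add, cos_add]
  constructor
  · ring
  · linear_combination (-1 / (2 * lam)) * sin_sq_add_cos_sq θ

/-- For the curve with `x₁(θ) = sin θ/(2λ) − sin((m−1)θ)/(2λk(m−1))` and
`x₂(θ) = −cos θ/(2λ) − cos((m−1)θ)/(2λk(m−1))`, one has
`A(θ) = x₂'·cos θ − x₁'·sin θ = sin(mθ)/(2λk)` and
`1/(2λ) − (x₂'·sin θ + x₁'·cos θ) = cos(mθ)/(2λk)`. -/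
theorem deformation_AB (lam k m : ℝ) (hlam : lam ≠ 0) (hk : k ≠ 0) (hm : m ≠ 1)
    (x₁ x₂ : ℝ → ℝ)
    (hx₁ : ∀ θ : ℝ,
      x₁ θ = Real.sin θ / (2 * lam) - Real.sin ((m - 1) * θ) / (2 * lam * k * (m - 1)))
    (hx₂ : ∀ θ : ℝ,
      x₂ θ = -Real.cos θ / (2 * lam) - Real.cos ((m - 1) * θ) / (2 * lam * k * (m - 1))) :
    ∀ θ : ℝ,
      deriv x₂ θ * Real.cos θ - deriv x₁ θ * Real.sin θ = Real.sin (m * θ) / (2 * lam * k) ∧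
      1 / (2 * lam) - (deriv x₂ θ * Real.sin θ + deriv x₁ θ * Real.cos θ)
        = Real.cos (m * θ) / (2 * lam * k) :=
  deformation_AB_general lam k m hm x₁ x₂ hx₁ hx₂
end

section
/- Let c ≠ 0 and k ≥ 1, set r = (2/c²)·√(k − 1) and E = (k − 2)/(2c), and define u(s) = k/c² + r·cos(c·s) and t(s) = −s/c − (r/2)·sin(c·s). Then for all s ∈ ℝ: (i) t'(s) = E − (c/2)·u(s), and (ii) u'(s)² + 4·t'(s)² = 4·u(s). In particular, at every s with u(s) > 0, setting x(s) = √(u(s)) one has x'(s)² + t'(s)²/x(s)² = 1 and t'(s) = E − (c/2)·x(s)². -/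
/-!
Differentiating gives `u' = -r c sin(cs)` and `t' = -1/c - (r c / 2) cos(cs)`, and the second is
`E - (c/2) u` by the choice of `E`. Since `r² c⁴ = 4 (k - 1)`, the Pythagorean identity turns
`u'² + 4 t'²` into `4 u`. Finally `x = √u` has `x' = u' / (2x)`, so
`x'² + t'²/x² = (u'² + 4 t'²) / (4u) = 1`.
-/

open Real

lemma hasDerivAt_const_add_mul_cos_mul (a r c s : ℝ) :
    HasDerivAt (fun σ => a + r * cos (c * σ)) (-(r * c * sin (c * s))) s := by
  have h := (((hasDerivAt_id s).const_mul c).cos.const_mul r).const_add a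
  simp only [id, mul_one] at h
  exact h.congr_deriv (by ring)

lemma hasDerivAt_neg_div_sub_mul_sin_mul (r c s : ℝ) :
    HasDerivAt (fun σ => -σ / c - r / 2 * sin (c * σ)) (-(1 / c) - r * c / 2 * cos (c * s)) s := by
  have h := ((hasDerivAt_id s).neg.div_const c).sub
    (((hasDerivAt_id s).const_mul c).sin.const_mul (r / 2))
  simp only [id, mul_one] at h
  exact h.congr_deriv (by ring)

lemma deriv_sqrt_sq_add_div_sq_eq_one {u : ℝ → ℝ} {u' T s : ℝ} (hu : HasDerivAt u u' s)
    (hpos : 0 < u s) (h : u' ^ 2 + 4 * T ^ 2 = 4 * u s) :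
    (deriv (fun σ => √(u σ)) s) ^ 2 + T ^ 2 / (√(u s)) ^ 2 = 1 := by
  have hsq : √(u s) ^ 2 = u s := sq_sqrt hpos.le
  have hx' : deriv (fun σ => √(u σ)) s = u' / (2 * √(u s)) := (hu.sqrt hpos.ne').deriv
  rw [hx', div_pow, mul_pow, hsq]
  field_simp
  linear_combination h

/-- The curve `(x, t)` with `x² = u = k/c² + r·cos(c·s)`, `t = −s/c − (r/2)·sin(c·s)`,
where `r = (2/c²)·√(k − 1)` and `E = (k − 2)/(2c)`, satisfies `t' = E − (c/2)·u` and
`u'² + 4·t'² = 4·u`; hence wherever `u > 0` and `x = √u`, the curve has unit horizontal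
speed `x'² + t'²/x² = 1` and energy `t' = E − (c/2)·x²`. -/
theorem generating_curve_verification (c k : ℝ) (hc : c ≠ 0) (hk : 1 ≤ k)
    (r E : ℝ) (hr : r = (2 / c ^ 2) * Real.sqrt (k - 1)) (hE : E = (k - 2) / (2 * c))
    (u t : ℝ → ℝ)
    (hu : ∀ s : ℝ, u s = k / c ^ 2 + r * Real.cos (c * s))
    (ht : ∀ s : ℝ, t s = -s / c - (r / 2) * Real.sin (c * s)) :
    (∀ s : ℝ, deriv t s = E - (c / 2) * u s) ∧
    (∀ s : ℝ, (deriv u s) ^ 2 + 4 * (deriv t s) ^ 2 = 4 * u s) ∧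
    (∀ s : ℝ, 0 < u s →
      (deriv (fun σ => Real.sqrt (u σ)) s) ^ 2 + (deriv t s) ^ 2 / (Real.sqrt (u s)) ^ 2 = 1 ∧
      deriv t s = E - (c / 2) * (Real.sqrt (u s)) ^ 2) := by
  have hdu (s : ℝ) : HasDerivAt u (-(r * c * sin (c * s))) s :=
    funext hu ▸ hasDerivAt_const_add_mul_cos_mul _ r c s
  have hdt (s : ℝ) : HasDerivAt t (-(1 / c) - r * c / 2 * cos (c * s)) s :=
    funext ht ▸ hasDerivAt_neg_div_sub_mul_sin_mul r c s
  have hr_sq : r ^ 2 * c ^ 4 = 4 * (k - 1) := by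
    rw [hr, mul_pow, sq_sqrt (by linarith)]
    field_simp
    ring
  have energy (s : ℝ) : deriv t s = E - (c / 2) * u s := by
    rw [(hdt s).deriv, hu, hE]
    field_simp
    ring
  have speed (s : ℝ) : (deriv u s) ^ 2 + 4 * (deriv t s) ^ 2 = 4 * u s := by
    rw [(hdu s).deriv, (hdt s).deriv, hu]
    field_simp
    linear_combination (4 * r ^ 2 * c ^ 4) * sin_sq_add_cos_sq (c * s) + 4 * hr_sq
  refine ⟨energy, speed, fun s hs => ⟨?_, ?_⟩⟩
  · exact deriv_sqrt_sq_add_div_sq_eq_one (hdu s) hs ((hdu s).deriv ▸ speed s)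
  · rw [sq_sqrt hs.le]
    exact energy s
end
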